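/- Pointwise fixpoint abstraction: let L and L' be complete lattices, F : (L → L') → (L → L') monotone with respect to pointwise order, and for each Q ∈ L let F̄_Q : L' → L' be monotone such that F(f)(Q) = F̄_Q(f(Q)) for all f and Q. Then for every Q ∈ L, (lfp F)(Q) = lfp F̄_Q. -/
import Mathlib

theorem stmt_11 {L L' : Type*} [CompleteLattice L] [CompleteLattice L']
    (F : (L → L') → (L → L')) (hF : Monotone F)
    (Fbar : L → L' → L') (hFbar : ∀ Q, Monotone (Fbar Q))
    (hcomm : ∀ (f : L → L') (Q : L), F f Q = Fbar Q (f Q)) :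
    ∀ Q : L, OrderHom.lfp ⟨F, hF⟩ Q = OrderHom.lfp ⟨Fbar Q, hFbar Q⟩ := by
  intro Q
  apply le_antisymm
  · have h : F (fun q => OrderHom.lfp ⟨Fbar q, hFbar q⟩) ≤ fun q => OrderHom.lfp ⟨Fbar q, hFbar q⟩ := by
      intro q
      rw [hcomm]
      exact le_of_eq (OrderHom.map_lfp ⟨Fbar q, hFbar q⟩)
    exact OrderHom.lfp_le ⟨F, hF⟩ h Q
  · apply OrderHom.lfp_le
    show Fbar Q (OrderHom.lfp ⟨F, hF⟩ Q) ≤ _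
    rw [← hcomm]
    exact le_of_eq (congrFun (OrderHom.map_lfp ⟨F, hF⟩) Q)
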